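/- (Lemma A.2 / Corollary 2.16, case i ≤ L < j: momentum-space IBP operators are parametric annihilators.) With the full matrix data below: for all 1 ≤ i ≤ L and L < j ≤ M, one has Σ_{a,b=1}^{N} C^{bi}_{aj} · x_a · (∂_b 𝒢 − λ_b·𝒰) = −𝒰 · Σ_{a=1}^{N} Σ_{m=L+1}^{M} A_a^{{i,m}} · g_{jm} · x_a, as an identity in the polynomial ring ℂ[x_1,…,x_N]. (This polynomial identity is exactly the statement that the parametric IBP operator P̂_{ij} of eq. (2.24) annihilates 𝒢^{−d/2}.) -/

import Mathlib

/-!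
Since `C^{bi}_{aj} = Σ_{m ≤ L} A_a^{{i,m}} (1 + δ_{mi}) A^b_{{m,j}}` for `j > L`, the left-hand side
is `Σ_m (-2 Λ_{im}) (D_m 𝒢 - (D_m J) 𝒰)` for the derivations `D_m = Σ_b A^b_{{m,j}} ∂_b`.
By `A⁻¹ A = 1`, `D_m` kills every entry of `Λ`, hence `𝒰` and `adj Λ`, and acts on the linear
forms `P_{kr} = Σ_a A_a^{{k,r}} x_a` (`r > L`) of `S = ¼ P g Pᵀ` by `D_m P_{kr} = δ_{mk} δ_{jr}`.
So `D_m 𝒢 - (D_m J) 𝒰 = ½ (adj Λ · V)_m` with `V = P g_j`, using the symmetry of `Λ` and `g`,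
and the sum collapses to `-(Λ · adj Λ · V)_i = -𝒰 V_i`.
-/

open Finset

noncomputable section

/-- Kronecker delta, valued in `ℂ`. -/
def kd {α : Type*} [DecidableEq α] (i j : α) : ℂ := if i = j then 1 else 0

/-- Embedding of the loop indices `{1,…,L}` into `{1,…,M}`, `M = L + E`. -/
abbrev li {L : ℕ} (E : ℕ) (i : Fin L) : Fin (L + E) := Fin.castAdd E i

/-- Embedding of the external indices `{L+1,…,M}` into `{1,…,M}`. -/
abbrev xi (L : ℕ) {E : ℕ} (r : Fin E) : Fin (L + E) := Fin.natAdd L r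

/-- The symmetric `L×L` matrix `Λ(x)` with entries
`Λ_{ij} = −((1+δ_{ij})/2)·Σ_a x_a·A_a^{{i,j}}`. -/
def LamMat {L E n : ℕ} (A : Fin n → Fin (L + E) → Fin (L + E) → ℂ) :
    Matrix (Fin L) (Fin L) (MvPolynomial (Fin n) ℂ) := fun i j =>
  MvPolynomial.C (-(1 + kd i j) / 2) *
    ∑ a, MvPolynomial.C (A a (li E i) (li E j)) * MvPolynomial.X a

/-- The coefficients `C^{bi}_{aj}` of the momentum-space IBP relations:
`C^{bi}_{aj} = Σ_{m=1}^{M} A_a^{{i,m}} A^b_{{m,j}} (1+δ_{mi})` for `j ≤ L`, and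
`C^{bi}_{aj} = Σ_{m=1}^{L} A_a^{{i,m}} A^b_{{m,j}} (1+δ_{mi})` for `j > L`. -/
def Cc {L E n : ℕ} (A : Fin n → Fin (L + E) → Fin (L + E) → ℂ)
    (B : Fin (L + E) → Fin (L + E) → Fin n → ℂ)
    (b : Fin n) (i : Fin L) (a : Fin n) (j : Fin (L + E)) : ℂ :=
  if (j : ℕ) < L then
    ∑ m : Fin (L + E), A a (li E i) m * B m j b * (1 + kd m (li E i))
  else
    ∑ m ∈ univ.filter (fun m : Fin (L + E) => (m : ℕ) < L),
      A a (li E i) m * B m j b * (1 + kd m (li E i))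

/-- The `L×L` matrix `S` with entries
`S_{ij} = (1/4)·Σ_{a,b} Σ_{r,s>L} g_{rs}·A_a^{{i,r}}·A_b^{{j,s}}·x_a·x_b`. -/
def SMat {L E n : ℕ} (A : Fin n → Fin (L + E) → Fin (L + E) → ℂ)
    (g : Fin E → Fin E → ℂ) :
    Matrix (Fin L) (Fin L) (MvPolynomial (Fin n) ℂ) := fun i j =>
  MvPolynomial.C ((1 : ℂ) / 4) * ∑ a, ∑ b, ∑ r, ∑ s,
    MvPolynomial.C (g r s * A a (li E i) (xi L r) * A b (li E j) (xi L s)) *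
      (MvPolynomial.X a * MvPolynomial.X b)

/-- `J = Σ_a λ_a x_a`. -/
def Jpoly {n : ℕ} (lam : Fin n → ℂ) : MvPolynomial (Fin n) ℂ :=
  ∑ a, MvPolynomial.C (lam a) * MvPolynomial.X a

/-- The second Symanzik polynomial
`ℱ = Σ_{i,j} (adjugate Λ)_{ij}·S_{ji} + 𝒰·J`. -/
def Fpoly {L E n : ℕ} (A : Fin n → Fin (L + E) → Fin (L + E) → ℂ)
    (g : Fin E → Fin E → ℂ) (lam : Fin n → ℂ) : MvPolynomial (Fin n) ℂ :=
  (∑ i, ∑ j, (LamMat A).adjugate i j * SMat A g j i) + (LamMat A).det * Jpoly lam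

/-- The Lee–Pomeransky polynomial `𝒢 = 𝒰 + ℱ`. -/
def Gpoly {L E n : ℕ} (A : Fin n → Fin (L + E) → Fin (L + E) → ℂ)
    (g : Fin E → Fin E → ℂ) (lam : Fin n → ℂ) : MvPolynomial (Fin n) ℂ :=
  (LamMat A).det + Fpoly A g lam

open MvPolynomial

namespace Matrix

variable {R A : Type*} [CommRing R] [CommRing A] [Algebra R A] {m : Type*} [Fintype m]
  [DecidableEq m]

lemma det_mem_of_forall_mem (S : Subalgebra R A) (X : Matrix m m A) (h : ∀ p q, X p q ∈ S) :
    X.det ∈ S := by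
  let X' : Matrix m m S := fun p q => ⟨X p q, h p q⟩
  have : X = S.val.mapMatrix X' := rfl
  rw [this, ← AlgHom.map_det]
  exact SetLike.coe_mem _

lemma adjugate_mem_of_forall_mem (S : Subalgebra R A) (X : Matrix m m A)
    (h : ∀ p q, X p q ∈ S) (p q : m) : X.adjugate p q ∈ S := by
  let X' : Matrix m m S := fun p q => ⟨X p q, h p q⟩
  have : X = S.val.mapMatrix X' := rfl
  rw [this, ← AlgHom.map_adjugate]
  exact SetLike.coe_mem _

end Matrix

namespace Derivation

variable {R A M : Type*} [CommRing R] [CommRing A] [Algebra R A] [AddCommMonoid M] [Module A M]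
  [Module R M] {m : Type*} [Fintype m] [DecidableEq m]

lemma map_eq_zero_of_mem_adjoin (D : Derivation R A M) {s : Set A} (h : ∀ x ∈ s, D x = 0)
    {x : A} (hx : x ∈ Algebra.adjoin R s) : D x = 0 :=
  D.eqOn_adjoin (D2 := 0) h hx

lemma map_det_eq_zero (D : Derivation R A M) (X : Matrix m m A) (h : ∀ p q, D (X p q) = 0) :
    D X.det = 0 :=
  D.map_eq_zero_of_mem_adjoin (s := Set.range X.uncurry) (by rintro _ ⟨⟨p, q⟩, rfl⟩; exact h p q)
    (X.det_mem_of_forall_mem _ fun p q => Algebra.subset_adjoin (Set.mem_range_self (p, q)))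

lemma map_adjugate_eq_zero (D : Derivation R A M) (X : Matrix m m A)
    (h : ∀ p q, D (X p q) = 0) (p q : m) : D (X.adjugate p q) = 0 :=
  D.map_eq_zero_of_mem_adjoin (s := Set.range X.uncurry) (by rintro _ ⟨⟨p, q⟩, rfl⟩; exact h p q)
    (X.adjugate_mem_of_forall_mem _ (fun p q => Algebra.subset_adjoin (Set.mem_range_self (p, q)))
      p q)

end Derivation

namespace MvPolynomial

variable {R σ : Type*} [CommRing R]

lemma derivation_map_C_mul (D : Derivation R (MvPolynomial σ R) (MvPolynomial σ R)) (a : R)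
    (p : MvPolynomial σ R) : D (C a * p) = C a * D p := by
  rw [C_mul', D.map_smul, smul_eq_C_mul]

variable [Fintype σ]

def dirDeriv (c : σ → R) : Derivation R (MvPolynomial σ R) (MvPolynomial σ R) :=
  ∑ b, (C (c b) : MvPolynomial σ R) • pderiv (R := R) b

def linForm (w : σ → R) : MvPolynomial σ R := ∑ a, C (w a) * X a

lemma dirDeriv_apply (c : σ → R) (p : MvPolynomial σ R) :
    dirDeriv c p = ∑ b, C (c b) * pderiv b p := by
  rw [dirDeriv, ← Derivation.coeFnAddMonoidHom_apply, map_sum, Finset.sum_apply]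
  rfl

lemma dirDeriv_X (c : σ → R) (a : σ) : dirDeriv c (X a) = C (c a) := by
  classical
  simp [dirDeriv_apply, pderiv_X, Pi.single_apply]

lemma dirDeriv_linForm (c w : σ → R) : dirDeriv c (linForm w) = C (∑ a, c a * w a) := by
  simp [linForm, dirDeriv_X, mul_comm]

end MvPolynomial

open Matrix

section LeePomeransky

variable {L E n : ℕ} {A : Fin n → Fin (L + E) → Fin (L + E) → ℂ}
  {B : Fin (L + E) → Fin (L + E) → Fin n → ℂ} {g : Fin E → Fin E → ℂ}

def extMat (A : Fin n → Fin (L + E) → Fin (L + E) → ℂ) :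
    Matrix (Fin L) (Fin E) (MvPolynomial (Fin n) ℂ) :=
  fun l r => linForm fun a => A a (li E l) (xi L r)

lemma kd_comm {α : Type*} [DecidableEq α] (p q : α) : kd p q = kd q p := by
  simp [kd, eq_comm]

lemma transpose_LamMat (hA : ∀ a i j, A a i j = A a j i) : (LamMat A)ᵀ = LamMat A := by
  ext p q
  simp only [transpose_apply, LamMat, kd_comm q p, hA _ (li E q)]

lemma transpose_adjugate_LamMat (hA : ∀ a i j, A a i j = A a j i) :
    (LamMat A).adjugateᵀ = (LamMat A).adjugate := by
  rw [adjugate_transpose, transpose_LamMat hA]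

lemma SMat_eq_sum_extMat (l k : Fin L) :
    SMat A g l k = C (1 / 4) * ∑ r, ∑ s, C (g r s) * (extMat A l r * extMat A k s) := by
  rw [SMat]
  congr 1
  simp only [extMat, linForm, Finset.sum_mul, Finset.mul_sum]
  simp_rw [Finset.sum_comm (γ := Fin n) (α := Fin E)]
  refine Finset.sum_congr rfl fun r _ => Finset.sum_congr rfl fun s _ => ?_
  rw [Finset.sum_comm]
  refine Finset.sum_congr rfl fun a _ => Finset.sum_congr rfl fun b _ => ?_
  simp only [map_mul]
  ring

def IsPairInverse (A : Fin n → Fin (L + E) → Fin (L + E) → ℂ)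
    (B : Fin (L + E) → Fin (L + E) → Fin n → ℂ) : Prop :=
  ∀ i j k l : Fin (L + E), ((i : ℕ) < L ∨ (j : ℕ) < L) → ((k : ℕ) < L ∨ (l : ℕ) < L) →
    ∑ a, B i j a * A a k l = if (i = k ∧ j = l) ∨ (i = l ∧ j = k) then 1 else 0

def ibpDir (B : Fin (L + E) → Fin (L + E) → Fin n → ℂ) (j : Fin E) (m : Fin L) : Fin n → ℂ :=
  B (li E m) (xi L j)

lemma xi_ne_li (j : Fin E) (q : Fin L) : xi L j ≠ li E q := by
  simp only [ne_eq, Fin.ext_iff, Fin.val_natAdd, Fin.val_castAdd]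
  omega

namespace IsPairInverse

lemma sum_ibpDir_mul_loop (hBA : IsPairInverse A B) (j : Fin E) (m p q : Fin L) :
    ∑ a, ibpDir B j m a * A a (li E p) (li E q) = 0 := by
  rw [ibpDir, hBA _ _ _ _ (Or.inl m.isLt) (Or.inl p.isLt), if_neg]
  rintro (⟨-, h⟩ | ⟨-, h⟩) <;> exact xi_ne_li _ _ h

lemma sum_ibpDir_mul_ext (hBA : IsPairInverse A B) (j : Fin E) (m k : Fin L) (s : Fin E) :
    ∑ a, ibpDir B j m a * A a (li E k) (xi L s) = if m = k ∧ j = s then 1 else 0 := by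
  rw [ibpDir, hBA _ _ _ _ (Or.inl m.isLt) (Or.inl k.isLt)]
  congr 1
  have := xi_ne_li s m
  simp only [li, xi, Fin.castAdd_inj, Fin.natAdd_inj]
  grind

lemma dirDeriv_LamMat (hBA : IsPairInverse A B) (j : Fin E) (m p q : Fin L) :
    dirDeriv (ibpDir B j m) (LamMat A p q) = 0 := by
  rw [LamMat, derivation_map_C_mul]
  change _ * dirDeriv _ (linForm _) = _
  rw [dirDeriv_linForm, hBA.sum_ibpDir_mul_loop, map_zero, mul_zero]

lemma dirDeriv_extMat (hBA : IsPairInverse A B) (j : Fin E) (m l : Fin L) (r : Fin E) :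
    dirDeriv (ibpDir B j m) (extMat A l r) = if m = l ∧ j = r then 1 else 0 := by
  rw [extMat, dirDeriv_linForm, hBA.sum_ibpDir_mul_ext]
  split_ifs <;> simp

lemma dirDeriv_SMat (hBA : IsPairInverse A B) (hg : ∀ r s, g r s = g s r) (j : Fin E)
    (m l k : Fin L) :
    dirDeriv (ibpDir B j m) (SMat A g l k) = C (1 / 4) *
      ((if m = k then (extMat A *ᵥ fun s => C (g j s)) l else 0) +
        (if m = l then (extMat A *ᵥ fun s => C (g j s)) k else 0)) := by
  rw [SMat_eq_sum_extMat, derivation_map_C_mul]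
  congr 1
  simp only [map_sum, Derivation.leibniz, dirDeriv_extMat hBA, ite_and, smul_eq_mul, mul_ite,
    mul_one, mul_zero, mul_add, derivation_C, add_zero, sum_add_distrib, sum_ite_irrel, sum_ite_eq,
    mem_univ, ↓reduceIte, sum_const_zero, mulVec, dotProduct]
  simp only [hg _ j, mul_comm (C _)]

lemma dirDeriv_Gpoly (hBA : IsPairInverse A B) (hA : ∀ a i j, A a i j = A a j i)
    (hg : ∀ r s, g r s = g s r) (lam : Fin n → ℂ) (j : Fin E) (m : Fin L) :
    dirDeriv (ibpDir B j m) (Gpoly A g lam) =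
      C (1 / 2) * ((LamMat A).adjugate *ᵥ extMat A *ᵥ fun s => C (g j s)) m +
        C (∑ b, ibpDir B j m b * lam b) * (LamMat A).det := by
  have hdet := (dirDeriv (ibpDir B j m)).map_det_eq_zero _ (hBA.dirDeriv_LamMat j m)
  have hadj := (dirDeriv (ibpDir B j m)).map_adjugate_eq_zero _ (hBA.dirDeriv_LamMat j m)
  have hJ : dirDeriv (ibpDir B j m) (Jpoly lam) = C (∑ b, ibpDir B j m b * lam b) :=
    dirDeriv_linForm _ _
  have hadj_symm (k : Fin L) : (LamMat A).adjugate k m = (LamMat A).adjugate m k :=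
    congrFun₂ (transpose_adjugate_LamMat hA) m k
  simp only [Gpoly, Fpoly, map_add, map_sum, Derivation.leibniz, hdet, hadj, hJ, smul_eq_mul,
    mul_zero, add_zero, zero_add, dirDeriv_SMat hBA hg, mul_add, mul_ite, Finset.sum_add_distrib,
    Finset.sum_ite_irrel, Finset.sum_const_zero, Finset.sum_ite_eq, Finset.mem_univ, if_true,
    hadj_symm]
  have half : (C (1 / 2) : MvPolynomial (Fin n) ℂ) = 2 * C (1 / 4) := by
    rw [← map_ofNat C 2, ← map_mul]
    norm_num
  have quarter : ∑ k, (LamMat A).adjugate m k * (C (1 / 4) * (extMat A *ᵥ fun s => C (g j s)) k) =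
      C (1 / 4) * ((LamMat A).adjugate *ᵥ extMat A *ᵥ fun s => C (g j s)) m := by
    simp only [mulVec, dotProduct, Finset.mul_sum, mul_left_comm]
  rw [quarter, half]
  ring

end IsPairInverse

lemma Cc_xi (b : Fin n) (i : Fin L) (a : Fin n) (j : Fin E) :
    Cc A B b i a (xi L j) = ∑ m, A a (li E i) (li E m) * ibpDir B j m b * (1 + kd i m) := by
  rw [Cc, if_neg (by simp), Finset.sum_filter, Fin.sum_univ_add]
  simp [ibpDir, kd, Fin.ext_iff, eq_comm]

lemma C_neg_two_mul_LamMat (i m : Fin L) :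
    C (-2) * LamMat A i m = ∑ a, C (A a (li E i) (li E m) * (1 + kd i m)) * X a := by
  rw [LamMat, ← mul_assoc, ← map_mul, Finset.mul_sum]
  refine Finset.sum_congr rfl fun a _ => ?_
  rw [← mul_assoc, ← map_mul]
  ring_nf

lemma sum_Cc_mul (Y : Fin n → MvPolynomial (Fin n) ℂ) (i : Fin L) (j : Fin E) :
    ∑ a, ∑ b, C (Cc A B b i a (xi L j)) * X a * Y b =
      ∑ m, C (-2) * LamMat A i m * ∑ b, C (ibpDir B j m b) * Y b := by
  simp only [Cc_xi, C_neg_two_mul_LamMat, map_sum, Finset.sum_mul, Finset.mul_sum]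
  simp_rw [Finset.sum_comm (γ := Fin n) (α := Fin L)]
  refine Finset.sum_congr rfl fun m _ => ?_
  rw [Finset.sum_comm]
  refine Finset.sum_congr rfl fun a _ => Finset.sum_congr rfl fun b _ => ?_
  simp only [map_mul]
  ring

lemma mulVec_extMat_apply (i : Fin L) (j : Fin E) :
    (extMat A *ᵥ fun s => C (g j s)) i = ∑ a, ∑ s, C (A a (li E i) (xi L s) * g j s) * X a := by
  simp only [mulVec, dotProduct, extMat, linForm, Finset.sum_mul]
  rw [Finset.sum_comm]
  refine Finset.sum_congr rfl fun a _ => Finset.sum_congr rfl fun s _ => ?_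
  rw [map_mul]
  ring

end LeePomeransky

theorem stmt_11_general {L E n : ℕ}
    (A : Fin n → Fin (L + E) → Fin (L + E) → ℂ)
    (B : Fin (L + E) → Fin (L + E) → Fin n → ℂ)
    (g : Fin E → Fin E → ℂ) (lam : Fin n → ℂ)
    (hAsymm : ∀ a i j, A a i j = A a j i)
    (hgsymm : ∀ r s, g r s = g s r)
    (hBA : ∀ i j k l : Fin (L + E), ((i : ℕ) < L ∨ (j : ℕ) < L) →
      ((k : ℕ) < L ∨ (l : ℕ) < L) →
      ∑ a, B i j a * A a k l = if (i = k ∧ j = l) ∨ (i = l ∧ j = k) then 1 else 0)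
    (i : Fin L) (j : Fin E) :
    ∑ a, ∑ b, MvPolynomial.C (Cc A B b i a (xi L j)) * MvPolynomial.X a *
        (MvPolynomial.pderiv b (Gpoly A g lam) - MvPolynomial.C (lam b) * (LamMat A).det)
      = -((LamMat A).det *
          ∑ a, ∑ m, MvPolynomial.C (A a (li E i) (xi L m) * g j m) * MvPolynomial.X a) := by
  have hD (m : Fin L) :
      ∑ b, C (ibpDir B j m b) * (pderiv b (Gpoly A g lam) - C (lam b) * (LamMat A).det) =
        C (1 / 2) * ((LamMat A).adjugate *ᵥ extMat A *ᵥ fun s => C (g j s)) m := by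
    have h := IsPairInverse.dirDeriv_Gpoly hBA hAsymm hgsymm lam j m
    rw [dirDeriv_apply] at h
    simp only [mul_sub, Finset.sum_sub_distrib, h, ← mul_assoc, ← map_mul, ← Finset.sum_mul,
      map_sum, add_sub_cancel_right]
  have hC : (C (-2) : MvPolynomial (Fin n) ℂ) * C (1 / 2) = -1 := by
    rw [← map_mul]
    norm_num
  rw [sum_Cc_mul]
  simp only [hD]
  calc _ = -(LamMat A *ᵥ (LamMat A).adjugate *ᵥ extMat A *ᵥ fun s => C (g j s)) i := by
        simp only [mulVec, dotProduct, ← Finset.sum_neg_distrib, mul_mul_mul_comm _ _ (C _), hC,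
          neg_one_mul]
    _ = -((LamMat A).det * (extMat A *ᵥ fun s => C (g j s)) i) := by
        rw [mulVec_mulVec, mul_adjugate, smul_mulVec, one_mulVec, Pi.smul_apply, smul_eq_mul]
    _ = _ := by rw [mulVec_extMat_apply]

/-- Lemma A.2 / Corollary 2.16, case `i ≤ L < j ≤ M`: the momentum-space IBP operators
are parametric annihilators, in the form of the polynomial identity
`Σ_{a,b} C^{bi}_{aj} x_a (∂_b 𝒢 − λ_b·𝒰) = −𝒰·Σ_a Σ_{m>L} A_a^{{i,m}} g_{jm} x_a`. -/
theorem stmt_11 {L E n : ℕ} (hL : 1 ≤ L) (hE : 1 ≤ E)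
    (A : Fin n → Fin (L + E) → Fin (L + E) → ℂ)
    (B : Fin (L + E) → Fin (L + E) → Fin n → ℂ)
    (g : Fin E → Fin E → ℂ) (lam : Fin n → ℂ)
    (hAsymm : ∀ a i j, A a i j = A a j i)
    (hBsymm : ∀ i j b, B i j b = B j i b)
    (hgsymm : ∀ r s, g r s = g s r)
    (hn : n = L * (L + 1) / 2 + L * E)
    (hBA : ∀ i j k l : Fin (L + E), ((i : ℕ) < L ∨ (j : ℕ) < L) →
      ((k : ℕ) < L ∨ (l : ℕ) < L) →
      ∑ a, B i j a * A a k l = if (i = k ∧ j = l) ∨ (i = l ∧ j = k) then 1 else 0)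
    (hAB : ∀ a b : Fin n,
      (∑ i ∈ univ.filter (fun i : Fin (L + E) => (i : ℕ) < L),
        ∑ j ∈ univ.filter (fun j : Fin (L + E) => i ≤ j), A a i j * B i j b)
        = if a = b then 1 else 0)
    (i : Fin L) (j : Fin E) :
    ∑ a, ∑ b, MvPolynomial.C (Cc A B b i a (xi L j)) * MvPolynomial.X a *
        (MvPolynomial.pderiv b (Gpoly A g lam) - MvPolynomial.C (lam b) * (LamMat A).det)
      = -((LamMat A).det *
          ∑ a, ∑ m, MvPolynomial.C (A a (li E i) (xi L m) * g j m) * MvPolynomial.X a) :=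
  stmt_11_general A B g lam hAsymm hgsymm hBA i j

end
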